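/- arXiv:0809.3719 — 4 statements merged into one kernel-verified Lean document; each statement's English description precedes it below -/
import Mathlib

section
/- If R is a finitely generated unital associative ring and n ≥ 3, then the Steinberg group St_n(R) is finitely generated: it is generated by the finite set {e_{ij}(x) : 1 ≤ i ≠ j ≤ n, x ∈ X} for any finite ring generating set X of R containing 1. -/
open FreeGroup

/-- Generators of the Steinberg group: triples `(i, j, r)` with `i ≠ j`. -/
abbrev StGen (n : ℕ) (R : Type*) := {p : Fin n × Fin n // p.1 ≠ p.2} × R

/-- The Steinberg relations. -/
def SteinbergRels (n : ℕ) (R : Type*) [Ring R] : Set (FreeGroup (StGen n R)) :=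
  {w | (∃ (i j : Fin n) (h : i ≠ j) (r₁ r₂ : R),
          w = of (⟨(i, j), h⟩, r₁) * of (⟨(i, j), h⟩, r₂) * (of (⟨(i, j), h⟩, r₁ + r₂))⁻¹) ∨
       (∃ (i j k : Fin n) (hij : i ≠ j) (hjk : j ≠ k) (hik : i ≠ k) (r₁ r₂ : R),
          w = of (⟨(i, j), hij⟩, r₁) * of (⟨(j, k), hjk⟩, r₂) * (of (⟨(i, j), hij⟩, r₁))⁻¹ * (of (⟨(j, k), hjk⟩, r₂))⁻¹ * (of (⟨(i, k), hik⟩, r₁ * r₂))⁻¹) ∨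
       (∃ (i j p q : Fin n) (hij : i ≠ j) (hpq : p ≠ q) (_ : j ≠ p) (_ : i ≠ q) (r₁ r₂ : R),
          w = of (⟨(i, j), hij⟩, r₁) * of (⟨(p, q), hpq⟩, r₂) * (of (⟨(i, j), hij⟩, r₁))⁻¹ * (of (⟨(p, q), hpq⟩, r₂))⁻¹)}

/-- The Steinberg group `St_n(R)`. -/
def Steinberg (n : ℕ) (R : Type*) [Ring R] := PresentedGroup (SteinbergRels n R)

instance (n : ℕ) (R : Type*) [Ring R] : Group (Steinberg n R) :=
  inferInstanceAs (Group (PresentedGroup (SteinbergRels n R)))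

/-- The generator `e_{ij}(r)` of the Steinberg group. -/
def st {n : ℕ} {R : Type*} [Ring R] (i j : Fin n) (h : i ≠ j) (r : R) : Steinberg n R :=
  PresentedGroup.of (⟨(i, j), h⟩, r)

/-!
Every `e_{ij}(r)` lies in the subgroup `H` generated by the `e_{ij}(x)`, `x ∈ X`, because the
coefficients `r` for which all `e_{ij}(r)` lie in `H` form a subring of `R`: additivity
`e_{ij}(a) e_{ij}(b) = e_{ij}(a + b)` handles sums and negatives, and for products one picks a
third index `k` (this is where `n ≥ 3` enters) and writes `e_{ij}(ab) = [e_{ik}(a), e_{kj}(b)]`.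
That subring contains `X`, hence is all of `R`, and the `e_{ij}(r)` generate `St_n(R)`.
-/

namespace Steinberg

open scoped commutatorElement

variable {n : ℕ} {R : Type*} [Ring R]

theorem st_mul_st (i j : Fin n) (h : i ≠ j) (r₁ r₂ : R) :
    st i j h r₁ * st i j h r₂ = st i j h (r₁ + r₂) :=
  PresentedGroup.mk_eq_mk_of_mul_inv_mem (Or.inl ⟨i, j, h, r₁, r₂, rfl⟩)

theorem commutator_st_st {i j k : Fin n} (hij : i ≠ j) (hjk : j ≠ k) (hik : i ≠ k) (r₁ r₂ : R) :
    (⁅st i j hij r₁, st j k hjk r₂⁆ : Steinberg n R) = st i k hik (r₁ * r₂) :=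
  PresentedGroup.mk_eq_mk_of_mul_inv_mem (rels := SteinbergRels n R)
    (Or.inr (Or.inl ⟨i, j, k, hij, hjk, hik, r₁, r₂, rfl⟩))

theorem st_zero (i j : Fin n) (h : i ≠ j) : st i j h (0 : R) = 1 :=
  left_eq_mul.mp (by rw [st_mul_st, add_zero] :
    st i j h (0 : R) = st i j h 0 * st i j h 0)

theorem st_neg (i j : Fin n) (h : i ≠ j) (r : R) : st i j h (-r) = (st i j h r)⁻¹ :=
  eq_inv_of_mul_eq_one_right (by rw [st_mul_st, add_neg_cancel, st_zero])

def coeffSubring (hn : 3 ≤ n) (H : Subgroup (Steinberg n R))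
    (h1 : ∀ i j (h : i ≠ j), st i j h (1 : R) ∈ H) : Subring R where
  carrier := {r | ∀ i j (h : i ≠ j), st i j h r ∈ H}
  zero_mem' i j h := by rw [st_zero]; exact H.one_mem
  one_mem' := h1
  add_mem' ha hb i j h := by rw [← st_mul_st]; exact H.mul_mem (ha i j h) (hb i j h)
  neg_mem' ha i j h := by rw [st_neg]; exact H.inv_mem (ha i j h)
  mul_mem' {a b} ha hb i j hij := by
    obtain ⟨k, hki, hkj⟩ := Fin.exists_ne_and_ne_of_two_lt i j hn
    rw [← commutator_st_st hki.symm hkj hij, commutatorElement_def]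
    exact H.mul_mem (H.mul_mem (H.mul_mem (ha i k _) (hb k j _)) (H.inv_mem (ha i k _)))
      (H.inv_mem (hb k j _))

theorem eq_top_of_st_mem {H : Subgroup (Steinberg n R)}
    (hH : ∀ i j (h : i ≠ j) (r : R), st i j h r ∈ H) : H = ⊤ := by
  have h_of : Subgroup.closure (Set.range (PresentedGroup.of : StGen n R → Steinberg n R)) = ⊤ :=
    PresentedGroup.closure_range_of _
  refine eq_top_iff.mpr (h_of.ge.trans ((Subgroup.closure_le H).mpr ?_))
  rintro _ ⟨⟨⟨⟨i, j⟩, hij⟩, r⟩, rfl⟩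
  exact hH i j hij r

end Steinberg

/-- If `R` is a finitely generated unital ring, generated by a finite set `X` containing `1`,
and `n ≥ 3`, then `St_n(R)` is generated by the finite set `{e_{ij}(x) : i ≠ j, x ∈ X}`;
in particular it is finitely generated. -/
theorem steinberg_finitely_generated {n : ℕ} (hn : 3 ≤ n) (R : Type*) [Ring R]
    (X : Finset R) (h1X : (1 : R) ∈ X) (hX : Subring.closure (X : Set R) = ⊤) :
    Subgroup.closure {g : Steinberg n R | ∃ (i j : Fin n) (h : i ≠ j) (x : R),
        x ∈ X ∧ g = st i j h x} = ⊤ := by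
  let H := Subgroup.closure {g : Steinberg n R | ∃ (i j : Fin n) (h : i ≠ j) (x : R),
    x ∈ X ∧ g = st i j h x}
  let S := Steinberg.coeffSubring hn H fun i j h ↦ Subgroup.subset_closure ⟨i, j, h, 1, h1X, rfl⟩
  have hS : S = ⊤ := top_unique <| hX ▸ Subring.closure_le.mpr
    fun x hx i j h ↦ Subgroup.subset_closure ⟨i, j, h, x, hx, rfl⟩
  exact Steinberg.eq_top_of_st_mem fun i j h r ↦ (hS ▸ Subring.mem_top r : r ∈ S) i j h
end

section
/- The group SL_∞(ℤ), defined as the union (direct limit) of the chain SL₂(ℤ) ⊂ SL₃(ℤ) ⊂ ⋯ under the upper-left corner embeddings, has no nontrivial finite quotients: every homomorphism from SL_∞(ℤ) to a finite group is trivial. -/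
/-- The shear endomorphism `v ↦ v + v(j) • e_i` of `ℤ^{⊕ℕ}`, i.e. the elementary matrix
`E_{ij}(1) = I + e_{ij}`. -/
noncomputable def shear (i j : ℕ) : Module.End ℤ (ℕ →₀ ℤ) :=
  1 + (Finsupp.lsingle i).comp (Finsupp.lapply j)

theorem shear_mul_aux {i j : ℕ} (h : i ≠ j) :
    ((Finsupp.lsingle i).comp (Finsupp.lapply j) : Module.End ℤ (ℕ →₀ ℤ)) *
      (Finsupp.lsingle i).comp (Finsupp.lapply j) = 0 := by
  ext v
  simp only [Module.End.mul_apply, LinearMap.comp_apply, Finsupp.lapply_apply,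
    Finsupp.lsingle_apply, Finsupp.single_apply, LinearMap.zero_apply]
  simp [h]

/-- The elementary matrix `E_{ij}(1)` as an invertible element (its inverse is `E_{ij}(-1)`). -/
noncomputable def elemUnit (i j : ℕ) (h : i ≠ j) : (Module.End ℤ (ℕ →₀ ℤ))ˣ where
  val := shear i j
  inv := 1 - (Finsupp.lsingle i).comp (Finsupp.lapply j)
  val_inv := by
    simp only [shear, add_mul, mul_sub, mul_one, one_mul, shear_mul_aux h]
    abel
  inv_val := by
    simp only [shear, sub_mul, mul_add, mul_one, one_mul, shear_mul_aux h]
    abel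

/-- `SL_∞(ℤ)`: the group generated by all elementary matrices `E_{ij}(1)`, `i ≠ j`.  Since
each `SL_n(ℤ)` is generated by its elementary matrices, this is the union (direct limit) of
the chain `SL₂(ℤ) ⊂ SL₃(ℤ) ⊂ ⋯` inside the endomorphisms of `ℤ^{⊕ℕ}`. -/
noncomputable def SLinf : Subgroup (Module.End ℤ (ℕ →₀ ℤ))ˣ :=
  Subgroup.closure {u | ∃ (i j : ℕ) (h : i ≠ j), u = elemUnit i j h}

/-!
The elementary matrices `E_ij` generate `SL_∞(ℤ)` and satisfy the Steinberg relations
`⁅E_ij, E_jk⁆ = E_ik` (for `i ≠ k`) and `Commute E_ij E_kl` (for `j ≠ k`, `i ≠ l`).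
Let `f` be a homomorphism to a finite group. By pigeonhole `f E_0k = f E_0k'` for some `k ≠ k'`,
and then for a fresh index `q`, `f E_0q = ⁅f E_0k', f E_kq⁆ = 1` because `E_0k'` commutes with
`E_kq`. Since every generator is a commutator involving a neighbouring one, `f E_ij = 1` spreads
from one pair `(i, j)` to all of them, so `f` is trivial.
-/

open scoped commutatorElement

section MatrixUnit

variable {R α : Type*} [Semiring R]

noncomputable def matrixUnit (i j : α) : Module.End R (α →₀ R) :=
  (Finsupp.lsingle i).comp (Finsupp.lapply j)

theorem matrixUnit_mul_of_ne {i j k l : α} (hjk : j ≠ k) :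
    (matrixUnit i j * matrixUnit k l : Module.End R (α →₀ R)) = 0 := by
  ext v
  simp [matrixUnit, hjk.symm]

theorem matrixUnit_mul_self (i j l : α) :
    (matrixUnit i j * matrixUnit j l : Module.End R (α →₀ R)) = matrixUnit i l := by
  ext v
  simp [matrixUnit]

end MatrixUnit

section ElemUnit

variable {i j k l : ℕ}

local notation "e" => (matrixUnit : ℕ → ℕ → Module.End ℤ (ℕ →₀ ℤ))

theorem elemUnit_val (hij : i ≠ j) : (elemUnit i j hij : Module.End ℤ (ℕ →₀ ℤ)) = 1 + e i j :=
  rfl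

theorem elemUnit_inv_val (hij : i ≠ j) :
    ((elemUnit i j hij)⁻¹ : (Module.End ℤ (ℕ →₀ ℤ))ˣ) = (1 - e i j : Module.End ℤ (ℕ →₀ ℤ)) :=
  rfl

theorem elemUnit_commute (hij : i ≠ j) (hkl : k ≠ l) (hjk : j ≠ k) (hli : l ≠ i) :
    Commute (elemUnit i j hij) (elemUnit k l hkl) := by
  refine Units.ext ?_
  simp only [Units.val_mul, elemUnit_val, mul_add, add_mul, mul_one, one_mul,
    matrixUnit_mul_of_ne hjk, matrixUnit_mul_of_ne hli]
  abel

theorem elemUnit_commutator (hij : i ≠ j) (hjk : j ≠ k) (hik : i ≠ k) :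
    ⁅elemUnit i j hij, elemUnit j k hjk⁆ = elemUnit i k hik := by
  refine Units.ext ?_
  simp only [commutatorElement_def, Units.val_mul, elemUnit_val, elemUnit_inv_val]
  have h₁ : (1 + e i j) * (1 + e j k) = 1 + e i j + e j k + e i k := by
    simp only [mul_add, add_mul, mul_one, one_mul, matrixUnit_mul_self]
    abel
  have h₂ : (1 + e i j + e j k + e i k) * (1 - e i j) = 1 + e j k + e i k := by
    simp only [mul_sub, add_mul, mul_one, one_mul, matrixUnit_mul_of_ne hij.symm,
      matrixUnit_mul_of_ne hik.symm]
    abel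
  have h₃ : (1 + e j k + e i k) * (1 - e j k) = 1 + e i k := by
    simp only [mul_sub, add_mul, mul_one, one_mul, matrixUnit_mul_of_ne hjk.symm]
    abel
  rw [h₁, h₂, h₃]

end ElemUnit

namespace SLinf

variable {i j k l : ℕ}

noncomputable def elem (i j : ℕ) (hij : i ≠ j) : SLinf :=
  ⟨elemUnit i j hij, Subgroup.subset_closure ⟨i, j, hij, rfl⟩⟩

theorem elem_commute (hij : i ≠ j) (hkl : k ≠ l) (hjk : j ≠ k) (hli : l ≠ i) :
    Commute (elem i j hij) (elem k l hkl) :=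
  Subtype.ext (elemUnit_commute hij hkl hjk hli).eq

theorem elem_commutator (hij : i ≠ j) (hjk : j ≠ k) (hik : i ≠ k) :
    ⁅elem i j hij, elem j k hjk⁆ = elem i k hik :=
  Subtype.ext (elemUnit_commutator hij hjk hik)

theorem hom_ext {H : Type*} [Group H] {f g : SLinf →* H}
    (h : ∀ i j (hij : i ≠ j), f (elem i j hij) = g (elem i j hij)) : f = g := by
  refine MonoidHom.eq_of_eqOn_dense Subgroup.closure_closure_coe_preimage ?_
  rintro x ⟨i, j, hij, hx⟩
  obtain rfl : x = elem i j hij := Subtype.ext hx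
  exact h i j hij

variable {H : Type*} [Group H] (f : SLinf →* H)

theorem map_elem_eq_one_right {hij : i ≠ j} (h : f (elem i j hij) = 1) (hjk : j ≠ k)
    (hik : i ≠ k) : f (elem i k hik) = 1 := by
  rw [← elem_commutator hij hjk hik, map_commutatorElement, h, commutatorElement_one_left]

theorem map_elem_eq_one_left {hij : i ≠ j} (h : f (elem i j hij) = 1) (hki : k ≠ i)
    (hkj : k ≠ j) : f (elem k j hkj) = 1 := by
  rw [← elem_commutator hki hij hkj, map_commutatorElement, h, commutatorElement_one_right]

theorem map_elem_eq_one {n q : ℕ} {hnq : n ≠ q} (h : f (elem n q hnq) = 1) (hij : i ≠ j) :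
    f (elem i j hij) = 1 := by
  set t := n + q + i + j + 1
  have hnt : f (elem n t (by omega)) = 1 := map_elem_eq_one_right f h (by omega) _
  by_cases hin : i = n
  · subst hin
    exact map_elem_eq_one_right f hnt (by omega) hij
  · have hit : f (elem i t (by omega)) = 1 := map_elem_eq_one_left f hnt hin _
    exact map_elem_eq_one_right f hit (by omega) hij

theorem map_elem_eq_one_of_map_elem_eq {k' q : ℕ} {hik : i ≠ k} {hik' : i ≠ k'}
    (h : f (elem i k hik) = f (elem i k' hik')) (hkk' : k ≠ k') (hkq : k ≠ q) (hiq : i ≠ q) :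
    f (elem i q hiq) = 1 := by
  rw [← elem_commutator hik hkq hiq, map_commutatorElement, h,
    commutatorElement_eq_one_iff_commute]
  exact (elem_commute hik' hkq hkk'.symm hiq.symm).map f

end SLinf

/-- `SL_∞(ℤ)` has no nontrivial finite quotients: every homomorphism to a finite group is
trivial. -/
theorem slinf_no_finite_quotients (H : Type) [Group H] [Finite H] (f : SLinf →* H) :
    ∀ g, f g = 1 := by
  have hne (m : ℕ) : 0 ≠ m + 1 := (Nat.succ_ne_zero m).symm
  obtain ⟨k, k', hkk', heq⟩ :=
    Finite.exists_ne_map_eq_of_infinite fun m : ℕ ↦ f (SLinf.elem 0 (m + 1) (hne m))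
  have hrow : f (SLinf.elem 0 (k + k' + 2) (by omega)) = 1 :=
    SLinf.map_elem_eq_one_of_map_elem_eq f heq (by omega) (by omega) _
  have hf : f = 1 := SLinf.hom_ext fun i j hij ↦ SLinf.map_elem_eq_one f hrow hij
  simp [hf]
end

section
/- In SL_∞(ℤ), any elementary matrix E_{ij}(1) = I + e_{ij} (i ≠ j) normally generates the whole group: the normal closure of E_{ij}(1) in SL_∞(ℤ) is SL_∞(ℤ). -/
/-!
For distinct `a, b, c` the Steinberg relation `⁅E_{ab}(1), E_{bc}(1)⁆ = E_{ac}(1)` exhibits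
`E_{ac}(1)` as a commutator with entries `E_{ab}(1)` and `E_{bc}(1)`, so a normal subgroup
containing either entry contains `E_{ac}(1)`. With two fresh indices `m, n` these moves give a
chain `E_{ij} ⇝ E_{im} ⇝ E_{nm} ⇝ E_{nl} ⇝ E_{kl}`; hence the normal closure of `E_{ij}(1)`
contains every generator `E_{kl}(1)` of `SL_∞(ℤ)`.
-/

open scoped commutatorElement

theorem one_add_mul_one_add_mul_one_sub_mul_one_sub {R : Type*} [Ring R] {x y : R}
    (hx : x * x = 0) (hy : y * y = 0) (hyx : y * x = 0) :
    (1 + x) * (1 + y) * ((1 - x) * (1 - y)) = 1 + x * y := by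
  noncomm_ring
  simp [hx, hy, hyx, ← mul_assoc]

theorem Finsupp.lsingle_comp_lapply_mul_lsingle_comp_lapply {R ι : Type*} [Semiring R]
    [DecidableEq ι] (i j k l : ι) :
    ((Finsupp.lsingle i).comp (Finsupp.lapply j) : Module.End R (ι →₀ R)) *
      (Finsupp.lsingle k).comp (Finsupp.lapply l) =
    if j = k then (Finsupp.lsingle i).comp (Finsupp.lapply l) else 0 := by
  ext v
  simp only [Module.End.mul_apply, LinearMap.comp_apply, Finsupp.lapply_apply,
    Finsupp.lsingle_apply, Finsupp.single_apply]
  split_ifs <;> simp_all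

theorem Subgroup.Normal.mem_of_steinberg_relation {G ι : Type*} [Group G] [Infinite ι]
    {N : Subgroup G} (hN : N.Normal) (e : ∀ a b : ι, a ≠ b → G)
    (he : ∀ a b c (hab : a ≠ b) (hbc : b ≠ c) (hac : a ≠ c), ⁅e a b hab, e b c hbc⁆ = e a c hac)
    {i j : ι} (hij : i ≠ j) (hmem : e i j hij ∈ N) {k l : ι} (hkl : k ≠ l) :
    e k l hkl ∈ N := by
  have move_right : ∀ {a b c} (hab : a ≠ b) (hbc : b ≠ c) (hac : a ≠ c),
      e a b hab ∈ N → e a c hac ∈ N := fun hab hbc hac h =>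
    he _ _ _ hab hbc hac ▸ commutator_le_left N ⊤ (commutator_mem_commutator h (mem_top _))
  have move_left : ∀ {a b c} (hab : a ≠ b) (hbc : b ≠ c) (hac : a ≠ c),
      e b c hbc ∈ N → e a c hac ∈ N := fun hab hbc hac h =>
    he _ _ _ hab hbc hac ▸ commutator_le_right ⊤ N (commutator_mem_commutator (mem_top _) h)
  classical
  obtain ⟨m, hm⟩ := Infinite.exists_notMem_finset ({i, j, l} : Finset ι)
  obtain ⟨n, hn⟩ := Infinite.exists_notMem_finset ({i, k, l, m} : Finset ι)
  simp only [Finset.mem_insert, Finset.mem_singleton, not_or] at hm hn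
  obtain ⟨hmi, hmj, hml⟩ := hm
  obtain ⟨hni, hnk, hnl, hnm⟩ := hn
  have mem_im := move_right hij (Ne.symm hmj) (Ne.symm hmi) hmem
  have mem_nm := move_left hni (Ne.symm hmi) hnm mem_im
  have mem_nl := move_right hnm hml hnl mem_nm
  exact move_left (Ne.symm hnk) hnl hkl mem_nl

theorem elemUnit_commutator_s12 {a b c : ℕ} (hab : a ≠ b) (hbc : b ≠ c) (hac : a ≠ c) :
    ⁅elemUnit a b hab, elemUnit b c hbc⁆ = elemUnit a c hac := by
  rw [Units.ext_iff]
  show shear a b * shear b c * ((elemUnit a b hab).inv * (elemUnit b c hbc).inv) = shear a c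
  simp only [elemUnit, shear]
  rw [one_add_mul_one_add_mul_one_sub_mul_one_sub (shear_mul_aux hab) (shear_mul_aux hbc)]
  · simp [Finsupp.lsingle_comp_lapply_mul_lsingle_comp_lapply]
  · simp [Finsupp.lsingle_comp_lapply_mul_lsingle_comp_lapply, hac.symm]

noncomputable def SLinf.elem_s12 (k l : ℕ) (hkl : k ≠ l) : SLinf :=
  ⟨elemUnit k l hkl, Subgroup.subset_closure ⟨k, l, hkl, rfl⟩⟩

theorem SLinf.commutator_elem {a b c : ℕ} (hab : a ≠ b) (hbc : b ≠ c) (hac : a ≠ c) :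
    ⁅elem_s12 a b hab, elem_s12 b c hbc⁆ = elem_s12 a c hac :=
  Subtype.ext (elemUnit_commutator_s12 hab hbc hac)

/-- Any elementary matrix `E_{ij}(1)` (`i ≠ j`) normally generates `SL_∞(ℤ)`: its normal
closure in `SL_∞(ℤ)` is the whole group. -/
theorem slinf_normally_generated_by_elementary (i j : ℕ) (h : i ≠ j) :
    Subgroup.normalClosure
      ({⟨elemUnit i j h, Subgroup.subset_closure ⟨i, j, h, rfl⟩⟩} : Set SLinf) = ⊤ := by
  refine eq_top_iff.2 <| Subgroup.closure_closure_coe_preimage.ge.trans <|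
    (Subgroup.closure_le _).2 ?_
  rintro _ ⟨k, l, hkl, hu⟩
  obtain rfl : _ = SLinf.elem_s12 k l hkl := Subtype.ext hu
  exact Subgroup.normalClosure_normal.mem_of_steinberg_relation SLinf.elem_s12
    (fun _ _ _ => SLinf.commutator_elem) h
    (Subgroup.subset_normalClosure (Set.mem_singleton _)) hkl
end

section
/- Let G = ⋃ᵢ Gᵢ be the union of a strictly increasing chain of subgroups G₁ ≤ G₂ ≤ ⋯ with each index |Gᵢ₊₁ : Gᵢ| finite (indexing so Gᵢ ⊆ Gᵢ₊₁). Then the coset graph T—with vertices the cosets gGᵢ for all g ∈ G and i, and edges between gGᵢ and hGⱼ when |i−j| = 1 and one coset contains the other—is a connected, locally finite graph, and the natural left G-action on T is fixed-point free on vertices. -/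
/-!
Every vertex is a coset `g • Gᵢ`. Since `Gᵢ < Gᵢ₊₁`, a coset of `Gᵢ₊₁` never lies in a coset
of `Gᵢ`, so `g • Gᵢ` has exactly one neighbour above, `g • Gᵢ₊₁`, and its neighbours below are the
`|Gᵢ : Gᵢ₋₁|` cosets of `Gᵢ₋₁` inside it. Going up from `g • Gᵢ` and `h • Gⱼ` one reaches the same
vertex at any level `k` with `g⁻¹ * h ∈ G_k`, which exists because the chain exhausts `G`.
Finally `g • Gᵢ` is fixed only by `g Gᵢ g⁻¹`, which is proper.
-/

open Pointwise

/-- Vertices of the coset graph: pairs `(i, C)` where `C = gGᵢ` is a left coset of `Gᵢ`. -/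
def CosetVertex (G : Type*) [Group G] (Gc : ℕ → Subgroup G) :=
  {p : ℕ × Set G // ∃ g : G, p.2 = g • (Gc p.1 : Set G)}

/-- The coset graph of a chain of subgroups: `gGᵢ` and `hGⱼ` are adjacent iff `|i - j| = 1`
and one coset contains the other. -/
def cosetGraph (G : Type*) [Group G] (Gc : ℕ → Subgroup G) :
    SimpleGraph (CosetVertex G Gc) where
  Adj x y := (x.1.1 = y.1.1 + 1 ∨ y.1.1 = x.1.1 + 1) ∧ (x.1.2 ⊆ y.1.2 ∨ y.1.2 ⊆ x.1.2)
  symm := by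
    constructor
    rintro x y ⟨h1, h2⟩
    exact ⟨h1.symm, h2.symm⟩
  loopless := by
    constructor
    rintro x ⟨h1, -⟩
    rcases h1 with h | h <;> omega

section LeftCoset

variable {G : Type*} [Group G]

theorem leftCoset_subset_leftCoset_iff {H K : Subgroup G} {g h : G} :
    g • (H : Set G) ⊆ h • (K : Set G) ↔ h⁻¹ * g ∈ K ∧ H ≤ K := by
  constructor
  · intro hsub
    have hg : h⁻¹ * g ∈ K := (mem_leftCoset_iff h).1 (hsub (mem_own_leftCoset H.toSubmonoid g))
    rw [(leftCoset_eq_iff K).2 hg, Set.smul_set_subset_smul_set_iff] at hsub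
    exact ⟨hg, hsub⟩
  · rintro ⟨hg, hHK⟩
    rw [(leftCoset_eq_iff K).2 hg]
    exact Set.smul_set_mono hHK

theorem exists_smul_leftCoset_ne {H : Subgroup G} (hH : H ≠ ⊤) (g : G) :
    ∃ x : G, x • g • (H : Set G) ≠ g • (H : Set G) := by
  obtain ⟨y, -, hy⟩ := (SetLike.lt_iff_le_and_exists.1 hH.lt_top).2
  refine ⟨g * y * g⁻¹, fun hfix => hy ?_⟩
  rw [smul_smul, inv_mul_cancel_right, leftCoset_eq_iff] at hfix
  simpa using hfix

end LeftCoset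

namespace CosetVertex

variable {G : Type*} [Group G] {Gc : ℕ → Subgroup G}

variable (Gc) in
def of (i : ℕ) (g : G) : CosetVertex G Gc :=
  ⟨(i, g • (Gc i : Set G)), g, rfl⟩

theorem exists_eq_of (v : CosetVertex G Gc) : ∃ i g, v = of Gc i g := by
  obtain ⟨⟨i, C⟩, g, hg⟩ := v
  exact ⟨i, g, Subtype.ext (Prod.ext rfl hg)⟩

theorem of_eq_of_iff {i : ℕ} {g h : G} : of Gc i g = of Gc i h ↔ g⁻¹ * h ∈ Gc i := by
  refine ⟨fun heq => (leftCoset_eq_iff _).1 (congrArg (·.1.2) heq), fun hmem => ?_⟩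
  exact Subtype.ext (Prod.ext rfl ((leftCoset_eq_iff _).2 hmem))

theorem finite_range_of_mul {j : ℕ} (hindex : (Gc j).relIndex (Gc (j + 1)) ≠ 0) (g : G) :
    (Set.range fun x : Gc (j + 1) => of Gc j (g * x)).Finite := by
  have : Finite (Gc (j + 1) ⧸ (Gc j).subgroupOf (Gc (j + 1))) :=
    Nat.finite_of_card_ne_zero hindex
  refine (Set.finite_range fun q : Gc (j + 1) ⧸ (Gc j).subgroupOf (Gc (j + 1)) =>
    of Gc j (g * q.out)).subset ?_
  rintro _ ⟨x, rfl⟩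
  obtain ⟨y, hy⟩ := QuotientGroup.mk_out_eq_mul _ x
  refine ⟨x, of_eq_of_iff.2 ?_⟩
  have hyj : ((y : Gc (j + 1)) : G) ∈ Gc j := Subgroup.mem_subgroupOf.1 y.2
  simpa [hy, mul_assoc] using inv_mem hyj

end CosetVertex

namespace cosetGraph

open CosetVertex

variable {G : Type*} [Group G] {Gc : ℕ → Subgroup G}

theorem adj_of_succ_self {i : ℕ} (hle : Gc i ≤ Gc (i + 1)) (g : G) :
    (cosetGraph G Gc).Adj (of Gc i g) (of Gc (i + 1) g) :=
  ⟨Or.inr rfl, Or.inl (leftCoset_subset_leftCoset_iff.2 ⟨by simp, hle⟩)⟩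

theorem adj_of_succ_iff {i : ℕ} (hlt : Gc i < Gc (i + 1)) {g h : G} :
    (cosetGraph G Gc).Adj (of Gc i g) (of Gc (i + 1) h) ↔ h⁻¹ * g ∈ Gc (i + 1) := by
  simp only [cosetGraph, of, leftCoset_subset_leftCoset_iff, hlt.le, hlt.not_ge,
    and_true, and_false, or_false, or_true, true_and]

theorem eq_of_succ_or_exists_of_adj (hmono : ∀ i, Gc i < Gc (i + 1)) {i : ℕ} {g : G}
    {w : CosetVertex G Gc} (hw : (cosetGraph G Gc).Adj (of Gc i g) w) :
    w = of Gc (i + 1) g ∨ ∃ j, i = j + 1 ∧ ∃ x ∈ Gc i, w = of Gc j (g * x) := by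
  obtain ⟨m, h, rfl⟩ := exists_eq_of w
  rcases hw.1 with rfl | rfl
  · exact Or.inr ⟨m, rfl, g⁻¹ * h, (adj_of_succ_iff (hmono m)).1 hw.symm, by simp⟩
  · exact Or.inl (of_eq_of_iff.2 ((adj_of_succ_iff (hmono i)).1 hw))

theorem finite_neighborSet_of (hmono : ∀ i, Gc i < Gc (i + 1))
    (hindex : ∀ i, (Gc i).relIndex (Gc (i + 1)) ≠ 0) (i : ℕ) (g : G) :
    ((cosetGraph G Gc).neighborSet (of Gc i g)).Finite := by
  cases i with
  | zero =>
    refine (Set.finite_singleton (of Gc 1 g)).subset fun w hw => ?_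
    obtain hup | ⟨j, hj, -⟩ := eq_of_succ_or_exists_of_adj hmono hw
    · exact hup
    · omega
  | succ j =>
    refine ((finite_range_of_mul (hindex j) g).insert (of Gc (j + 2) g)).subset fun w hw => ?_
    obtain hup | ⟨_, hj, x, hx, rfl⟩ := eq_of_succ_or_exists_of_adj hmono hw
    · exact Or.inl hup
    · cases Nat.succ_injective hj
      exact Or.inr ⟨⟨x, hx⟩, rfl⟩

theorem reachable_of_of_le (hmono : ∀ i, Gc i ≤ Gc (i + 1)) {i n : ℕ} (hin : i ≤ n) (g : G) :
    (cosetGraph G Gc).Reachable (of Gc i g) (of Gc n g) := by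
  induction n, hin using Nat.le_induction with
  | base => rfl
  | succ n _ ih => exact ih.trans (adj_of_succ_self (hmono n) g).reachable

end cosetGraph

open CosetVertex cosetGraph in
/-- For a strictly increasing chain of subgroups `G₁ < G₂ < ⋯` exhausting `G`, with each
index `|Gᵢ₊₁ : Gᵢ|` finite, the coset graph is connected and locally finite, and the
natural left `G`-action on its vertices (by left translation of cosets) has no fixed
vertex. -/
theorem cosetGraph_connected_locallyFinite_fixedPointFree
    (G : Type*) [Group G] (Gc : ℕ → Subgroup G)
    (hmono : ∀ i, Gc i < Gc (i + 1))
    (hunion : ∀ g : G, ∃ i, g ∈ Gc i)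
    (hindex : ∀ i, (Gc i).relIndex (Gc (i + 1)) ≠ 0) :
    (cosetGraph G Gc).Preconnected ∧
    (∀ v : CosetVertex G Gc, ((cosetGraph G Gc).neighborSet v).Finite) ∧
    (∀ v : CosetVertex G Gc, ∃ x : G, x • v.1.2 ≠ v.1.2) := by
  refine ⟨fun v w => ?_, fun v => ?_, fun v => ?_⟩
  · obtain ⟨i, g, rfl⟩ := exists_eq_of v
    obtain ⟨j, h, rfl⟩ := exists_eq_of w
    obtain ⟨k, hk⟩ := hunion (g⁻¹ * h)
    have hle : ∀ i, Gc i ≤ Gc (i + 1) := fun i => (hmono i).le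
    have hmeet : of Gc (max (max i j) k) g = of Gc (max (max i j) k) h :=
      of_eq_of_iff.2 (monotone_nat_of_le_succ hle (le_max_right _ k) hk)
    have hg := reachable_of_of_le hle ((le_max_left i j).trans (le_max_left _ k)) g
    have hh := reachable_of_of_le hle ((le_max_right i j).trans (le_max_left _ k)) h
    exact (hmeet ▸ hg).trans hh.symm
  · obtain ⟨i, g, rfl⟩ := exists_eq_of v
    exact finite_neighborSet_of hmono hindex i g
  · obtain ⟨i, g, rfl⟩ := exists_eq_of v
    exact exists_smul_leftCoset_ne (hmono i).ne_top g
end
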